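/- arXiv:1603.06252 — 2 statements merged into one kernel-verified Lean document; each statement's English description precedes it below -/
import Mathlib

section
/- Fix a finite set X with symmetric distance functions d_t for t ∈ ℝ, and a closed interval [s, z]. For a ∈ X and s ≤ z, define Grp(a, s, z) = { x ∈ X : for all t ∈ [s, z], x is ε-connected to a at time t }. Let G = Grp(a, s_G, z) and H = Grp(c, s_H, z) be two such maximal groups ending at the same time z, with a ∈ G and c ∈ H. Then (G ∩ H ≠ ∅ and |G| ≤ |H|) if and only if (G ⊆ H and G ≠ ∅). -/
def EpsConnected {X : Type*} (d : ℝ → X → X → ℝ) (ε t : ℝ) (a b : X) : Prop :=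
  Relation.ReflTransGen (fun x y => d t x y ≤ ε) a b

/-- The group of entities ε-connected to `a` at every time of `[s, z]`. -/
def EpsGrp {X : Type*} (d : ℝ → X → X → ℝ) (ε : ℝ) (a : X) (s z : ℝ) : Set X :=
  {x | ∀ t ∈ Set.Icc s z, EpsConnected d ε t x a}

theorem EpsConnected.symm' {X : Type*} {d : ℝ → X → X → ℝ}
    (hsymm : ∀ t a b, d t a b = d t b a) {ε t : ℝ} {a b : X}
    (h : EpsConnected d ε t a b) : EpsConnected d ε t b a := by
  induction h with
  | refl => exact Relation.ReflTransGen.refl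
  | tail _ hstep ih =>
    exact Relation.ReflTransGen.head (by rw [hsymm]; exact hstep) ih

theorem nested_sizes {X : Type*} [Fintype X] (d : ℝ → X → X → ℝ)
    (hsymm : ∀ t a b, d t a b = d t b a) (hrefl : ∀ t a, d t a a = 0)
    (ε : ℝ) (hε : 0 ≤ ε) (a c : X) (sG sH z : ℝ) (hsG : sG ≤ z) (hsH : sH ≤ z)
    (ha : a ∈ EpsGrp d ε a sG z) (hc : c ∈ EpsGrp d ε c sH z) :
    ((EpsGrp d ε a sG z ∩ EpsGrp d ε c sH z).Nonempty ∧
        (EpsGrp d ε a sG z).ncard ≤ (EpsGrp d ε c sH z).ncard) ↔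
      (EpsGrp d ε a sG z ⊆ EpsGrp d ε c sH z ∧ (EpsGrp d ε a sG z).Nonempty) := by
  have hGfin : (EpsGrp d ε a sG z).Finite := Set.toFinite _
  have hHfin : (EpsGrp d ε c sH z).Finite := Set.toFinite _
  constructor
  · rintro ⟨⟨x, hxG, hxH⟩, hcard⟩
    have key : EpsGrp d ε a sG z ⊆ EpsGrp d ε c sH z ∨
        EpsGrp d ε c sH z ⊆ EpsGrp d ε a sG z := by
      rcases le_total sG sH with h | h
      · left; intro g hg t ht
        have ht' : t ∈ Set.Icc sG z := ⟨le_trans h ht.1, ht.2⟩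
        exact (hg t ht').trans (((hxG t ht').symm' hsymm).trans (hxH t ht))
      · right; intro g hg t ht
        have ht' : t ∈ Set.Icc sH z := ⟨le_trans h ht.1, ht.2⟩
        exact (hg t ht').trans (((hxH t ht').symm' hsymm).trans (hxG t ht))
    rcases key with hsub | hsub
    · exact ⟨hsub, ⟨x, hxG⟩⟩
    · have heq := Set.eq_of_subset_of_ncard_le hsub hcard hGfin
      exact ⟨heq ▸ subset_rfl, ⟨x, hxG⟩⟩
  · rintro ⟨hsub, ⟨x, hx⟩⟩
    exact ⟨⟨x, hx, hsub hx⟩, Set.ncard_le_ncard hsub hHfin⟩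
end

section
/- Let (X, d) be a finite metric space with |X| ≥ 1, let T be a minimum spanning tree of the complete weighted graph on X with edge weights d, and let ε ≥ 0. Then two points p, q ∈ X are ε-connected (joined by a chain of points of X with consecutive distances at most ε) if and only if every edge on the unique path from p to q in T has weight at most ε. -/
/-!
Cut property. If an edge `ab` of the tree path from `p` to `q` had weight `> ε`, deleting it
from `T` separates `p` from `q`, so an `ε`-chain from `p` to `q` has a link `xy` crossing
between the two sides. Replacing `ab` by `xy` yields another spanning tree, and minimality of
`T` forces `d(a, b) ≤ d(x, y) ≤ ε`. Conversely, the tree path itself is an `ε`-chain.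
-/

open SimpleGraph

theorem Relation.ReflTransGen.exists_rel_of_left_of_not_right {α : Type*} {r : α → α → Prop}
    {P : α → Prop} {a b : α} (h : ReflTransGen r a b) (ha : P a) (hb : ¬P b) :
    ∃ x y, r x y ∧ P x ∧ ¬P y := by
  induction h with
  | refl => exact absurd ha hb
  | @tail c d _ hcd ih =>
    by_cases hc : P c
    · exact ⟨c, d, hcd, hc, hb⟩
    · exact ih hc

namespace SimpleGraph

variable {V : Type*} {G H T : SimpleGraph V} {a b u v x y : V}

theorem Walk.reflTransGen_of_forall_mem_edges {r : V → V → Prop} (W : G.Walk u v)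
    (h : ∀ x y, s(x, y) ∈ W.edges → r x y) : Relation.ReflTransGen r u v := by
  induction W with
  | nil => exact .refl
  | cons _ W ih =>
    exact .head (h _ _ (by simp)) (ih fun x y hxy => h x y (by simp [hxy]))

theorem IsAcyclic.not_reachable_deleteEdges_of_mem_edges (hG : G.IsAcyclic) {W : G.Walk u v}
    (hW : W.IsPath) (he : s(a, b) ∈ W.edges) : ¬(G.deleteEdges {s(a, b)}).Reachable u v := by
  classical
  rw [reachable_deleteEdges_iff_exists_walk]
  rintro ⟨W', hW'⟩
  have hpath : W'.toPath = ⟨W, hW⟩ := (hG.subsingleton_path u v).elim _ _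
  exact hW' (W'.edges_toPath_subset_edges (by rwa [hpath]))

theorem Preconnected.reachable_or_reachable_of_le_sup_edge (hG : G.Preconnected)
    (hle : G ≤ H ⊔ edge a b) (v : V) : H.Reachable a v ∨ H.Reachable b v := by
  suffices ∀ u, G.Walk u v →
      H.Reachable a u ∨ H.Reachable b u → H.Reachable a v ∨ H.Reachable b v from
    this a (hG a v).some (Or.inl .rfl)
  intro u W
  induction W with
  | nil => exact id
  | @cons u w v huw W ih =>
    intro hu
    apply ih
    rcases hle huw with huw | huw
    · exact hu.imp (·.trans huw.reachable) (·.trans huw.reachable)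
    · rcases (edge_adj ..).1 huw with ⟨⟨rfl, rfl⟩ | ⟨rfl, rfl⟩, -⟩
      · exact Or.inr .rfl
      · exact Or.inl .rfl

theorem Preconnected.of_le_sup_edge (hG : G.Preconnected) (hle : G ≤ H ⊔ edge a b)
    (hab : H.Reachable a b) : H.Preconnected := by
  have hreach v : H.Reachable a v :=
    (hG.reachable_or_reachable_of_le_sup_edge hle v).elim id hab.trans
  exact fun u v => (hreach u).symm.trans (hreach v)

theorem le_deleteEdges_sup_edge : G ≤ G.deleteEdges {s(a, b)} ⊔ edge a b := by
  intro u v h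
  by_cases huv : s(u, v) = s(a, b)
  · exact Or.inr ((edge_adj ..).2 ⟨Sym2.eq_iff.1 huv, h.ne⟩)
  · exact Or.inl (deleteEdges_adj.2 ⟨h, huv⟩)

theorem IsTree.deleteEdges_sup_edge_of_not_reachable (hT : T.IsTree)
    (hxy : ¬(T.deleteEdges {s(a, b)}).Reachable x y) :
    (T.deleteEdges {s(a, b)} ⊔ edge x y).IsTree := by
  set H := T.deleteEdges {s(a, b)}
  have hle : T ≤ H ⊔ edge a b := le_deleteEdges_sup_edge
  refine ⟨(connected_iff _).2 ⟨?_, ⟨a⟩⟩,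
    (hT.isAcyclic.anti (deleteEdges_le _)).sup_edge_of_not_reachable hxy⟩
  refine hT.connected.preconnected.of_le_sup_edge (hle.trans (sup_le_sup_right le_sup_left _)) ?_
  have hne : x ≠ y := fun h => hxy (h ▸ .rfl)
  have hxy' : (H ⊔ edge x y).Reachable x y :=
    Adj.reachable (Or.inr ((edge_adj ..).2 ⟨.inl ⟨rfl, rfl⟩, hne⟩))
  have hH : H ≤ H ⊔ edge x y := le_sup_left
  rcases hT.connected.preconnected.reachable_or_reachable_of_le_sup_edge hle x with hx | hx <;>
  rcases hT.connected.preconnected.reachable_or_reachable_of_le_sup_edge hle y with hy | hy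
  · exact absurd (hx.symm.trans hy) hxy
  · exact ((hx.mono hH).trans hxy').trans (hy.mono hH).symm
  · exact ((hy.mono hH).trans hxy'.symm).trans (hx.mono hH).symm
  · exact absurd (hx.symm.trans hy) hxy

theorem sum_edgeSet_deleteEdges_sup_edge_add [Finite V] {M : Type*} [AddCommMonoid M]
    (w : Sym2 V → M) (hab : G.Adj a b) (hxy : ¬(G.deleteEdges {s(a, b)}).Adj x y)
    (hne : x ≠ y) :
    ∑ e ∈ (Set.toFinite (G.deleteEdges {s(a, b)} ⊔ edge x y).edgeSet).toFinset, w e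
        + w s(a, b) =
      ∑ e ∈ (Set.toFinite G.edgeSet).toFinset, w e + w s(x, y) := by
  classical
  have hedges : (Set.toFinite (G.deleteEdges {s(a, b)} ⊔ edge x y).edgeSet).toFinset =
      insert s(x, y) ((Set.toFinite G.edgeSet).toFinset.erase s(a, b)) := by
    ext e
    simp [edgeSet_sup, edgeSet_edge_of_ne hne, and_comm]
  have hnotin : s(x, y) ∉ (Set.toFinite G.edgeSet).toFinset.erase s(a, b) := by
    simpa [and_comm] using hxy
  rw [hedges, Finset.sum_insert hnotin, add_assoc, Finset.sum_erase_add _ _ (by simpa), add_comm]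

end SimpleGraph

theorem mst_bottleneck_general {X : Type*} [Fintype X] [MetricSpace X]
    (T : SimpleGraph X) (w : Sym2 X → ℝ) (hw : ∀ x y : X, w s(x, y) = dist x y)
    (hT : T.IsTree)
    (hmin : ∀ T' : SimpleGraph X, T'.IsTree →
      ∑ e ∈ (Set.toFinite T.edgeSet).toFinset, w e ≤
        ∑ e ∈ (Set.toFinite T'.edgeSet).toFinset, w e)
    (ε : ℝ) (p q : X) :
    Relation.ReflTransGen (fun x y : X => dist x y ≤ ε) p q ↔
      ∀ (W : T.Walk p q), W.IsPath → ∀ e ∈ W.edges, w e ≤ ε := by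
  constructor
  · intro hchain W hW e he
    induction e using Sym2.ind with | _ a b => ?_
    set H := T.deleteEdges {s(a, b)}
    have hpq : ¬H.Reachable p q := hT.isAcyclic.not_reachable_deleteEdges_of_mem_edges hW he
    obtain ⟨x, y, hxy, hx, hy⟩ :=
      hchain.exists_rel_of_left_of_not_right (P := H.Reachable p) .rfl hpq
    have hHxy : ¬H.Reachable x y := fun h => hy (hx.trans h)
    have hexchange := sum_edgeSet_deleteEdges_sup_edge_add w (W.adj_of_mem_edges he)
      (fun h => hHxy h.reachable) (fun h => hHxy (h ▸ .rfl))
    have hle := hmin _ (hT.deleteEdges_sup_edge_of_not_reachable hHxy)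
    linarith [hw x y]
  · intro h
    obtain ⟨W, hW, -⟩ := hT.existsUnique_path p q
    exact W.reflTransGen_of_forall_mem_edges fun x y hxy => hw x y ▸ h W hW _ hxy

theorem mst_bottleneck {X : Type*} [Fintype X] [DecidableEq X] [MetricSpace X] [Nonempty X]
    (T : SimpleGraph X) (w : Sym2 X → ℝ) (hw : ∀ x y : X, w s(x, y) = dist x y)
    (hT : T.IsTree)
    (hmin : ∀ T' : SimpleGraph X, T'.IsTree →
      ∑ e ∈ (Set.toFinite T.edgeSet).toFinset, w e ≤
        ∑ e ∈ (Set.toFinite T'.edgeSet).toFinset, w e)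
    (ε : ℝ) (hε : 0 ≤ ε) (p q : X) :
    Relation.ReflTransGen (fun x y : X => dist x y ≤ ε) p q ↔
      ∀ (W : T.Walk p q), W.IsPath → ∀ e ∈ W.edges, w e ≤ ε :=
  mst_bottleneck_general T w hw hT hmin ε p q
end
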